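/- arXiv:1006.4737 — 4 statements merged into one kernel-verified Lean document; each statement's English description precedes it below -/
import Mathlib

section
/- If a symmetric bilinear form α satisfies the curvature commutation relation α(R(X,Y)Z, W) + α(Z, R(X,Y)W) = 0 for all X, Y, Z, W (which holds for any parallel second order symmetric tensor by the Ricci identity), then (a+b)[η(Y)α(X,ξ) − η(X)α(Y,ξ)] = 0 for all X, Y (formula (2.2)). -/
open RealInnerProductSpace

/-- formula (2.2): if a symmetric bilinear form `α` satisfies the
curvature commutation relation `α(R(X,Y)Z, W) + α(Z, R(X,Y)W) = 0`, then
`(a+b)[η(Y)α(X,ξ) − η(X)α(Y,ξ)] = 0` for all `X, Y`. -/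
theorem qcc_formula_2_2
    {V : Type*} [NormedAddCommGroup V] [InnerProductSpace ℝ V] [FiniteDimensional ℝ V]
    (n : ℕ) (hn : 2 < n) (hdim : Module.finrank ℝ V = n)
    (ξ : V) (hξ : ‖ξ‖ = 1) (a b : ℝ)
    (R : V → V → V → V)
    (hR : ∀ X Y Z : V, R X Y Z =
      a • (⟪Y, Z⟫ • X - ⟪X, Z⟫ • Y)
      + (b * (⟪Y, Z⟫ * ⟪X, ξ⟫ - ⟪X, Z⟫ * ⟪Y, ξ⟫)) • ξ
      + (b * ⟪Z, ξ⟫) • (⟪Y, ξ⟫ • X - ⟪X, ξ⟫ • Y))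
    (α : V →ₗ[ℝ] V →ₗ[ℝ] ℝ)
    (hsymm : ∀ X Y : V, α X Y = α Y X)
    (hcomm : ∀ X Y Z W : V, α (R X Y Z) W + α Z (R X Y W) = 0) :
    ∀ X Y : V, (a + b) * (⟪Y, ξ⟫ * α X ξ - ⟪X, ξ⟫ * α Y ξ) = 0 := by
  intro X Y
  have hξξ : ⟪ξ, ξ⟫ = (1:ℝ) := real_inner_self_eq_norm_sq ξ ▸ by rw [hξ]; norm_num
  have h := hcomm X Y ξ ξ
  rw [hR X Y ξ, hsymm ξ] at h
  simp only [hξξ, map_add, map_smul, map_sub, LinearMap.add_apply, LinearMap.smul_apply,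
    LinearMap.sub_apply, smul_eq_mul, one_mul] at h
  ring_nf at h ⊢
  linarith
end

section
/- Let α be a symmetric bilinear form satisfying the curvature commutation relation α(R(X,Y)Z, W) + α(Z, R(X,Y)W) = 0 for all X, Y, Z, W, on a regular quasi-constant curvature manifold (a + b ≠ 0). Then α(Y, ξ) = α(ξ,ξ)·⟨Y, ξ⟩ for every vector Y (formula (2.5)). -/
open RealInnerProductSpace

/-- formula (2.5): in the regular case `a + b ≠ 0`, a symmetric
bilinear form `α` satisfying the curvature commutation relation fulfills
`α(Y,ξ) = α(ξ,ξ)⟨Y,ξ⟫` for every `Y`. -/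
theorem qcc_formula_2_5
    {V : Type*} [NormedAddCommGroup V] [InnerProductSpace ℝ V] [FiniteDimensional ℝ V]
    (n : ℕ) (hn : 2 < n) (hdim : Module.finrank ℝ V = n)
    (ξ : V) (hξ : ‖ξ‖ = 1) (a b : ℝ)
    (R : V → V → V → V)
    (hR : ∀ X Y Z : V, R X Y Z =
      a • (⟪Y, Z⟫ • X - ⟪X, Z⟫ • Y)
      + (b * (⟪Y, Z⟫ * ⟪X, ξ⟫ - ⟪X, Z⟫ * ⟪Y, ξ⟫)) • ξ
      + (b * ⟪Z, ξ⟫) • (⟪Y, ξ⟫ • X - ⟪X, ξ⟫ • Y))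
    (hreg : a + b ≠ 0)
    (α : V →ₗ[ℝ] V →ₗ[ℝ] ℝ)
    (hsymm : ∀ X Y : V, α X Y = α Y X)
    (hcomm : ∀ X Y Z W : V, α (R X Y Z) W + α Z (R X Y W) = 0) :
    ∀ Y : V, α Y ξ = α ξ ξ * ⟪Y, ξ⟫ := by
  intro Y
  have hξξ : ⟪ξ, ξ⟫ = (1 : ℝ) := by
    rw [real_inner_self_eq_norm_mul_norm, hξ]; ring
  have h := hcomm Y ξ ξ ξ
  rw [hR Y ξ ξ] at h
  simp only [hξξ, map_add, map_smul, map_sub, LinearMap.add_apply, LinearMap.smul_apply,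
    LinearMap.sub_apply, smul_eq_mul, one_mul, mul_one, hsymm ξ Y] at h
  have : (a + b) * (α Y ξ - α ξ ξ * ⟪Y, ξ⟫) = 0 := by
    nlinarith [h]
  have := mul_eq_zero.mp this
  rcases this with h1 | h1
  · exact absurd h1 hreg
  · linarith
end

section
/- If a symmetric bilinear form α satisfies the curvature commutation relation α(R(X,Y)Z, W) + α(Z, R(X,Y)W) = 0 and the manifold is regular (a + b ≠ 0), then setting Y = ξ yields η(Z)α(X,W) − ⟨X,Z⟩α(ξ,W) + η(W)α(X,Z) − ⟨X,W⟩α(ξ,Z) = 0 for all vectors X, Z, W. -/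
open RealInnerProductSpace

/-- in the regular case, setting `Y = ξ` in the curvature commutation
relation yields `η(Z)α(X,W) − ⟨X,Z⟩α(ξ,W) + η(W)α(X,Z) − ⟨X,W⟩α(ξ,Z) = 0`. -/
theorem qcc_formula_Y_eq_xi
    {V : Type*} [NormedAddCommGroup V] [InnerProductSpace ℝ V] [FiniteDimensional ℝ V]
    (n : ℕ) (hn : 2 < n) (hdim : Module.finrank ℝ V = n)
    (ξ : V) (hξ : ‖ξ‖ = 1) (a b : ℝ)
    (R : V → V → V → V)
    (hR : ∀ X Y Z : V, R X Y Z =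
      a • (⟪Y, Z⟫ • X - ⟪X, Z⟫ • Y)
      + (b * (⟪Y, Z⟫ * ⟪X, ξ⟫ - ⟪X, Z⟫ * ⟪Y, ξ⟫)) • ξ
      + (b * ⟪Z, ξ⟫) • (⟪Y, ξ⟫ • X - ⟪X, ξ⟫ • Y))
    (hreg : a + b ≠ 0)
    (α : V →ₗ[ℝ] V →ₗ[ℝ] ℝ)
    (hsymm : ∀ X Y : V, α X Y = α Y X)
    (hcomm : ∀ X Y Z W : V, α (R X Y Z) W + α Z (R X Y W) = 0) :
    ∀ X Z W : V,
      ⟪Z, ξ⟫ * α X W - ⟪X, Z⟫ * α ξ W + ⟪W, ξ⟫ * α X Z - ⟪X, W⟫ * α ξ Z = 0 := by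
  intro X Z W
  have hx : (⟪ξ, ξ⟫ : ℝ) = 1 := by
    rw [real_inner_self_eq_norm_sq, hξ]; norm_num
  have h := hcomm X ξ Z W
  rw [hR, hR] at h
  simp only [map_add, map_smul, map_sub, LinearMap.add_apply, LinearMap.smul_apply,
    LinearMap.sub_apply, smul_eq_mul, hx] at h
  rw [hsymm Z X, hsymm Z ξ, real_inner_comm ξ Z, real_inner_comm ξ W] at h
  have hz : (⟪Z, ξ⟫ : ℝ) = ⟪ξ, Z⟫ := real_inner_comm _ _
  have hw : (⟪W, ξ⟫ : ℝ) = ⟪ξ, W⟫ := real_inner_comm _ _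
  have key : (a+b) * (⟪Z, ξ⟫ * α X W - ⟪X, Z⟫ * α ξ W + ⟪W, ξ⟫ * α X Z - ⟪X, W⟫ * α ξ Z) = 0 := by
    linear_combination h + ((a+b) * α X W) * hz + ((a+b) * α X Z) * hw
  exact (mul_eq_zero.mp key).resolve_left hreg
end

section
/- (Theorem 2.5) A parallel second order symmetric covariant tensor in a regular quasi-constant curvature manifold M^n_{a,b}(ξ) is a constant multiple of the metric tensor. Algebraic core: if a + b ≠ 0 and the symmetric bilinear form α satisfies α(R(X,Y)Z, W) + α(Z, R(X,Y)W) = 0 for all X, Y, Z, W (the consequence of parallelism via the Ricci identity), then α(X, Z) = α(ξ,ξ)·⟨X, Z⟩ for all vectors X, Z. -/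
open RealInnerProductSpace

/-- Theorem 2.5: a parallel second order symmetric covariant tensor in
a regular quasi-constant curvature manifold is a constant multiple of the metric: if
`a + b ≠ 0` and `α` satisfies the curvature commutation relation, then
`α(X,Z) = α(ξ,ξ)⟨X,Z⟩` for all `X, Z`. -/
theorem qcc_parallel_tensor_is_multiple_of_metric
    {V : Type*} [NormedAddCommGroup V] [InnerProductSpace ℝ V] [FiniteDimensional ℝ V]
    (n : ℕ) (hn : 2 < n) (hdim : Module.finrank ℝ V = n)
    (ξ : V) (hξ : ‖ξ‖ = 1) (a b : ℝ)
    (R : V → V → V → V)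
    (hR : ∀ X Y Z : V, R X Y Z =
      a • (⟪Y, Z⟫ • X - ⟪X, Z⟫ • Y)
      + (b * (⟪Y, Z⟫ * ⟪X, ξ⟫ - ⟪X, Z⟫ * ⟪Y, ξ⟫)) • ξ
      + (b * ⟪Z, ξ⟫) • (⟪Y, ξ⟫ • X - ⟪X, ξ⟫ • Y))
    (hreg : a + b ≠ 0)
    (α : V →ₗ[ℝ] V →ₗ[ℝ] ℝ)
    (hsymm : ∀ X Y : V, α X Y = α Y X)
    (hcomm : ∀ X Y Z W : V, α (R X Y Z) W + α Z (R X Y W) = 0) :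
    ∀ X Z : V, α X Z = α ξ ξ * ⟪X, Z⟫ := by
  have hξξ : (⟪ξ, ξ⟫ : ℝ) = 1 := by
    rw [real_inner_self_eq_norm_mul_norm, hξ]; norm_num
  intro X Z
  have h1 := hcomm X ξ ξ Z
  have h2 := hcomm X ξ ξ ξ
  have h3 := hcomm Z ξ ξ ξ
  simp only [hR, hξξ, map_add, map_sub, map_smul, LinearMap.add_apply, LinearMap.sub_apply,
    LinearMap.smul_apply, smul_eq_mul, real_inner_comm ξ Z, real_inner_comm ξ X,
    hsymm ξ X, hsymm ξ Z] at h1 h2 h3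
  have key : (a + b) * ((α X) Z - (α ξ) ξ * ⟪X, Z⟫) = 0 := by
    linear_combination h1 + ((⟪ξ, X⟫ : ℝ) / 2) * h3 - ((⟪ξ, Z⟫ : ℝ) / 2) * h2
  have := (mul_eq_zero.mp key).resolve_left hreg
  linarith
end
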